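/- arXiv:2002.11518 — 9 statements merged into one kernel-verified Lean document; each statement's English description precedes it below -/
import Mathlib

section
/- For all natural numbers n and m with n ≠ m, there is no surjective monotone (order-preserving) map from the poset F_n onto the poset F_m; hence the family {F_n : n ∈ ℕ} is an antichain with respect to the relation 'is an order-preserving image of'. -/
/-!
Number `F_n` from the top as `t, x₀, y₀, x₁, y₁, …, x_{n+2}, r`, at positions `0, …, 2n+6`.
Position `j` lies below position `i` iff `i ≤ j`, except that `g` and `g + 1` are incomparable for
the *gaps* `g = 2`, `g = 2n+4` and `g` odd, `g ≤ 2n+3` (and, for `n = 0`, so are `y₀` and `x₂`).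
For `n ≥ 1` the incomparability graph of `F_n` is therefore the path `1–2–3–4`, the edges
`(2a+1)–(2a+2)` for `2 ≤ a ≤ n`, and the path `(2n+3)–(2n+4)–(2n+5)`; for `n = 0` it contains the
path `1–2–3–4–5`.

A monotone surjection `F_n → F_m` pulls incomparable pairs back to incomparable pairs, so the
preimages of a path of `F_m` form a path of `F_n`. Counting gives `m ≤ n`. If `n ≥ 1`, `F_n` has no
path on five vertices, so `m ≥ 1`; then the two end paths of `F_m` have the end paths of `F_n` as
their only preimages, and the middle positions `5, …, 2n+2` of `F_n` are mapped injectively into the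
middle positions `5, …, 2m+2` of `F_m`, whence `n ≤ m`.
-/

inductive FElem : Type
  | r : FElem
  | t : FElem
  | x : ℕ → FElem
  | y : ℕ → FElem

inductive FGen (n : ℕ) : FElem → FElem → Prop
  | rx : FGen n FElem.r (FElem.x (n+2))
  | ry : FGen n FElem.r (FElem.y (n+1))
  | xx : ∀ i : ℕ, i ≤ n+1 → FGen n (FElem.x (i+1)) (FElem.x i)
  | yy : ∀ j : ℕ, j ≤ n → FGen n (FElem.y (j+1)) (FElem.y j)
  | xt : FGen n (FElem.x 0) FElem.t
  | yt : FGen n (FElem.y 0) FElem.t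
  | yx : ∀ i : ℕ, i ≤ n → FGen n (FElem.y (i+1)) (FElem.x i)
  | xy : ∀ i : ℕ, 1 ≤ i → i ≤ n → FGen n (FElem.x (i+1)) (FElem.y i)

/-- The order of the poset `F_n`: the reflexive transitive closure of the
generating relations. -/
def FLe (n : ℕ) : FElem → FElem → Prop := Relation.ReflTransGen (FGen n)

/-- The underlying set of the poset `F_n`. -/
def FCarrier (n : ℕ) : Set FElem :=
  {a | a = FElem.r ∨ a = FElem.t ∨ (∃ i ≤ n+2, a = FElem.x i) ∨ (∃ j ≤ n+1, a = FElem.y j)}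

def IsGap (n g : ℕ) : Prop := 1 ≤ g ∧ g ≤ 2*n+4 ∧ (g ≤ 3 ∨ g = 2*n+4 ∨ g % 2 = 1)

def posLe (n j i : ℕ) : Prop :=
  i = j ∨ (i < j ∧ ¬(j = i+1 ∧ IsGap n i) ∧ ¬(n = 0 ∧ i = 2 ∧ j = 5))

def pos (n : ℕ) : FElem → ℕ
  | .t => 0
  | .x i => 2*i+1
  | .y j => 2*j+2
  | .r => 2*n+6

/-- The inverse of `pos n`; positions beyond `2n+6` go to `r`, which makes `elem n` monotone on
all of `ℕ`. -/
def elem (n k : ℕ) : FElem :=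
  if k = 0 then .t else if 2*n+6 ≤ k then .r else if k % 2 = 1 then .x (k/2) else .y (k/2 - 1)

lemma elem_mem (n k : ℕ) : elem n k ∈ FCarrier n := by
  unfold elem
  split_ifs
  · exact .inr (.inl rfl)
  · exact .inl rfl
  · exact .inr (.inr (.inl ⟨k/2, by omega, rfl⟩))
  · exact .inr (.inr (.inr ⟨k/2 - 1, by omega, rfl⟩))

lemma pos_elem (n k : ℕ) : pos n (elem n k) = min k (2*n+6) := by
  unfold elem
  split_ifs <;> simp only [pos] <;> omega

lemma elem_pos {n : ℕ} {a : FElem} (ha : a ∈ FCarrier n) : elem n (pos n a) = a := by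
  rcases ha with rfl | rfl | ⟨i, hi, rfl⟩ | ⟨j, hj, rfl⟩ <;> rw [pos, elem]
  · rw [if_neg (by omega), if_pos le_rfl]
  · rw [if_pos rfl]
  · rw [if_neg (by omega), if_neg (by omega), if_pos (by omega)]
    congr 1
    omega
  · rw [if_neg (by omega), if_neg (by omega), if_neg (by omega)]
    congr 1
    omega

lemma pos_le {n : ℕ} {a : FElem} (ha : a ∈ FCarrier n) : pos n a ≤ 2*n+6 := by
  rcases ha with rfl | rfl | ⟨i, hi, rfl⟩ | ⟨j, hj, rfl⟩ <;> simp only [pos] <;> omega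

lemma posLe_trans {n k j i : ℕ} (hkj : posLe n k j) (hji : posLe n j i) : posLe n k i := by
  unfold posLe IsGap at *
  omega

lemma posLe_min {n j i : ℕ} (h : posLe n j i) : posLe n (min j (2*n+6)) (min i (2*n+6)) := by
  unfold posLe IsGap at *
  omega

lemma FGen.posLe {n : ℕ} {a b : FElem} (h : FGen n a b) : posLe n (pos n a) (pos n b) := by
  cases h <;> simp only [pos, _root_.posLe, IsGap] <;> omega

lemma FLe.posLe {n : ℕ} {a b : FElem} (h : FLe n a b) : posLe n (pos n a) (pos n b) := by
  induction h with
  | refl => exact Or.inl rfl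
  | tail _ hbc ih => exact posLe_trans ih hbc.posLe

section Chains

variable {n i j : ℕ}

lemma FLe.x_x (hji : j ≤ i) (hi : i ≤ n+2) : FLe n (.x i) (.x j) := by
  induction i, hji using Nat.le_induction with
  | base => exact .refl
  | succ i _ ih => exact .head (.xx i (by omega)) (ih (by omega))

lemma FLe.y_y (hji : j ≤ i) (hi : i ≤ n+1) : FLe n (.y i) (.y j) := by
  induction i, hji using Nat.le_induction with
  | base => exact .refl
  | succ i _ ih => exact .head (.yy i (by omega)) (ih (by omega))

lemma FLe.y_x (hij : i < j) (hj : j ≤ n+1) : FLe n (.y j) (.x i) :=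
  (FLe.y_y hij hj).tail (.yx i (by omega))

lemma FLe.x_y (hn : 1 ≤ n) (hji : j < i) (hi2 : 2 ≤ i) (hi : i ≤ n+2) (hj : j ≤ n) :
    FLe n (.x i) (.y j) := by
  rcases Nat.eq_zero_or_pos j with rfl | hj0
  · exact ((FLe.x_x hi2 hi).tail (.xy 1 le_rfl hn)).tail (.yy 0 (by omega))
  · exact (FLe.x_x hji hi).tail (.xy j hj0 hj)

lemma FLe.x_t (hi : i ≤ n+2) : FLe n (.x i) .t := (FLe.x_x (Nat.zero_le i) hi).tail .xt

lemma FLe.y_t (hi : i ≤ n+1) : FLe n (.y i) .t := (FLe.y_y (Nat.zero_le i) hi).tail .yt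

lemma FLe.r_x (hi : i ≤ n+2) : FLe n .r (.x i) := .head .rx (FLe.x_x hi le_rfl)

lemma FLe.r_y (hi : i ≤ n+1) : FLe n .r (.y i) := .head .ry (FLe.y_y hi le_rfl)

end Chains

lemma FLe_of_posLe {n : ℕ} {a b : FElem} (ha : a ∈ FCarrier n) (hb : b ∈ FCarrier n)
    (h : posLe n (pos n a) (pos n b)) : FLe n a b := by
  rcases ha with rfl | rfl | ⟨i, hi, rfl⟩ | ⟨i, hi, rfl⟩ <;>
    rcases hb with rfl | rfl | ⟨j, hj, rfl⟩ | ⟨j, hj, rfl⟩ <;>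
    simp only [pos, posLe, IsGap] at h
  · exact .refl
  · exact (FLe.r_x (Nat.zero_le _)).trans (FLe.x_t (Nat.zero_le _))
  · exact FLe.r_x hj
  · exact FLe.r_y hj
  · omega
  · exact .refl
  · omega
  · omega
  · omega
  · exact FLe.x_t hi
  · exact FLe.x_x (by omega) hi
  · exact FLe.x_y (by omega) (by omega) (by omega) hi (by omega)
  · omega
  · exact FLe.y_t hi
  · exact FLe.y_x (by omega) hi
  · exact FLe.y_y (by omega) hi

lemma FLe_elem_of_posLe {n j i : ℕ} (h : posLe n j i) : FLe n (elem n j) (elem n i) :=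
  FLe_of_posLe (elem_mem n j) (elem_mem n i) (by simpa only [pos_elem] using posLe_min h)

def GapAdj (n k k' : ℕ) : Prop := (k' = k+1 ∧ IsGap n k) ∨ (k = k'+1 ∧ IsGap n k')

namespace GapAdj

variable {n a b c d e : ℕ}

lemma symm (h : GapAdj n a b) : GapAdj n b a := Or.symm h

lemma not_posLe (h : GapAdj n a b) : ¬ posLe n a b := by
  unfold GapAdj posLe IsGap at *
  omega

lemma of_not_posLe (hn : 1 ≤ n) (hab : ¬ posLe n a b) (hba : ¬ posLe n b a) : GapAdj n a b := by
  unfold GapAdj posLe IsGap at *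
  omega

lemma eq_of_path_four (hn : 1 ≤ n) (hab : GapAdj n a b) (hbc : GapAdj n b c) (hcd : GapAdj n c d)
    (hac : a ≠ c) (hbd : b ≠ d) :
    (a = 1 ∧ b = 2 ∧ c = 3 ∧ d = 4) ∨ (a = 4 ∧ b = 3 ∧ c = 2 ∧ d = 1) := by
  unfold GapAdj IsGap at *
  omega

lemma eq_of_path_three (hn : 1 ≤ n) (hab : GapAdj n a b) (hbc : GapAdj n b c) (hac : a ≠ c) :
    (a = 2*n+3 ∧ b = 2*n+4 ∧ c = 2*n+5) ∨ (a = 2*n+5 ∧ b = 2*n+4 ∧ c = 2*n+3) ∨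
      b = 2 ∨ b = 3 := by
  unfold GapAdj IsGap at *
  omega

lemma eq_of_two_neighbors (hn : 1 ≤ n) (hac : GapAdj n a c) (hbc : GapAdj n b c) (hab : a ≠ b) :
    c = 2 ∨ c = 3 ∨ c = 2*n+4 := by
  unfold GapAdj IsGap at *
  omega

lemma not_path_five (hn : 1 ≤ n) (hab : GapAdj n a b) (hbc : GapAdj n b c) (hcd : GapAdj n c d)
    (hde : GapAdj n d e) (hac : a ≠ c) (hbd : b ≠ d) (hce : c ≠ e) : False := by
  unfold GapAdj IsGap at *
  omega

end GapAdj

/-- `s` is a monotone surjection `F_n → F_m`, read in positions. -/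
structure IsPosSurjection (n m : ℕ) (s : ℕ → ℕ) : Prop where
  posLe_map : ∀ ⦃j i⦄, posLe n j i → posLe m (s j) (s i)
  surjOn : Set.SurjOn s (Finset.range (2*n+7)) (Finset.range (2*m+7))

lemma isPosSurjection_of_surjective {n m : ℕ} {f : FCarrier n → FCarrier m}
    (hf : Function.Surjective f)
    (hmono : ∀ a b : FCarrier n, FLe n a.1 b.1 → FLe m (f a).1 (f b).1) :
    IsPosSurjection n m (fun k => pos m (f ⟨elem n k, elem_mem n k⟩)) where
  posLe_map _ _ h := (hmono _ _ (FLe_elem_of_posLe h)).posLe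
  surjOn q hq := by
    obtain ⟨a, ha⟩ := hf ⟨elem m q, elem_mem m q⟩
    have ha' : (⟨elem n (pos n a), elem_mem n _⟩ : FCarrier n) = a := Subtype.ext (elem_pos a.2)
    refine ⟨pos n a, Finset.mem_range.2 (Nat.lt_succ_of_le (pos_le a.2)), ?_⟩
    simp only [ha', ha, pos_elem]
    exact min_eq_left (Nat.le_of_lt_succ (Finset.mem_range.1 hq))

namespace IsPosSurjection

variable {n m : ℕ} {s : ℕ → ℕ} {i q a b c d e u v w k k' : ℕ}

lemma le (hs : IsPosSurjection n m s) : m ≤ n := by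
  have := Finset.card_le_card_of_surjOn s hs.surjOn
  simp only [Finset.card_range] at this
  omega

lemma exists_apply_eq (hs : IsPosSurjection n m s) (hq : q ≤ 2*m+6) : ∃ k, s k = q := by
  obtain ⟨k, -, hk⟩ := hs.surjOn (Finset.mem_range.2 (Nat.lt_succ_of_le hq))
  exact ⟨k, hk⟩

lemma gapAdj (hs : IsPosSurjection n m s) (hn : 1 ≤ n) (h : GapAdj m (s k) (s k')) :
    GapAdj n k k' :=
  .of_not_posLe hn (fun h' => h.not_posLe (hs.posLe_map h'))
    (fun h' => h.symm.not_posLe (hs.posLe_map h'))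

lemma gapAdj_of_isGap (hs : IsPosSurjection n m s) (hn : 1 ≤ n) (hq : IsGap m q) (hk : s k = q)
    (hk' : s k' = q+1) : GapAdj n k k' :=
  hs.gapAdj hn (.inl ⟨by rw [hk, hk'], hk ▸ hq⟩)

lemma one_le (hs : IsPosSurjection n m s) (hn : 1 ≤ n) : 1 ≤ m := by
  by_contra! hm
  obtain rfl : m = 0 := by omega
  obtain ⟨a, ha⟩ := hs.exists_apply_eq (q := 1) (by omega)
  obtain ⟨b, hb⟩ := hs.exists_apply_eq (q := 2) (by omega)
  obtain ⟨c, hc⟩ := hs.exists_apply_eq (q := 3) (by omega)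
  obtain ⟨d, hd⟩ := hs.exists_apply_eq (q := 4) (by omega)
  obtain ⟨e, he⟩ := hs.exists_apply_eq (q := 5) (by omega)
  exact GapAdj.not_path_five hn
    (hs.gapAdj_of_isGap hn (by unfold IsGap; omega) ha hb)
    (hs.gapAdj_of_isGap hn (by unfold IsGap; omega) hb hc)
    (hs.gapAdj_of_isGap hn (by unfold IsGap; omega) hc hd)
    (hs.gapAdj_of_isGap hn (by unfold IsGap; omega) hd he)
    (by rintro rfl; omega) (by rintro rfl; omega) (by rintro rfl; omega)

lemma eq_of_top_fence (hs : IsPosSurjection n m s) (hn : 1 ≤ n) (ha : s a = 1) (hb : s b = 2)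
    (hc : s c = 3) (hd : s d = 4) : a = 1 ∧ b = 2 ∧ c = 3 ∧ d = 4 := by
  have hab := hs.gapAdj_of_isGap hn (by unfold IsGap; omega) ha hb
  have hbc := hs.gapAdj_of_isGap hn (by unfold IsGap; omega) hb hc
  have hcd := hs.gapAdj_of_isGap hn (by unfold IsGap; omega) hc hd
  rcases GapAdj.eq_of_path_four hn hab hbc hcd (by rintro rfl; omega) (by rintro rfl; omega)
    with h | ⟨rfl, -, -, rfl⟩
  · exact h
  · have := hs.posLe_map (show posLe n 4 1 by unfold posLe IsGap; omega)
    rw [ha, hd] at this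
    unfold posLe at this
    omega

lemma eq_of_apply_eq_top (hs : IsPosSurjection n m s) (hn : 1 ≤ n) (hk : s k = q) (h1 : 1 ≤ q)
    (h4 : q ≤ 4) : k = q := by
  obtain ⟨a, ha⟩ := hs.exists_apply_eq (q := 1) (by omega)
  obtain ⟨b, hb⟩ := hs.exists_apply_eq (q := 2) (by omega)
  obtain ⟨c, hc⟩ := hs.exists_apply_eq (q := 3) (by omega)
  obtain ⟨d, hd⟩ := hs.exists_apply_eq (q := 4) (by omega)
  subst hk
  interval_cases hq : s k
  · exact (hs.eq_of_top_fence hn hq hb hc hd).1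
  · exact (hs.eq_of_top_fence hn ha hq hc hd).2.1
  · exact (hs.eq_of_top_fence hn ha hb hq hd).2.2.1
  · exact (hs.eq_of_top_fence hn ha hb hc hq).2.2.2

lemma apply_top (hs : IsPosSurjection n m s) (hn : 1 ≤ n) (h1 : 1 ≤ q) (h4 : q ≤ 4) : s q = q := by
  obtain ⟨k, hk⟩ := hs.exists_apply_eq (q := q) (by omega)
  obtain rfl := hs.eq_of_apply_eq_top hn hk h1 h4
  exact hk

lemma eq_of_bottom_fence (hs : IsPosSurjection n m s) (hn : 1 ≤ n) (hu : s u = 2*m+3)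
    (hv : s v = 2*m+4) (hw : s w = 2*m+5) : u = 2*n+3 ∧ v = 2*n+4 ∧ w = 2*n+5 := by
  have huv := hs.gapAdj_of_isGap hn (by unfold IsGap; omega) hu hv
  have hvw := hs.gapAdj_of_isGap hn (by unfold IsGap; omega) hv hw
  rcases GapAdj.eq_of_path_three hn huv hvw (by rintro rfl; omega)
    with h | ⟨rfl, -, rfl⟩ | rfl | rfl
  · exact h
  · have := hs.posLe_map (show posLe n (2*n+5) (2*n+3) by unfold posLe IsGap; omega)
    rw [hu, hw] at this
    unfold posLe at this
    omega
  · have := hs.apply_top hn (q := 2) (by omega) (by omega)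
    omega
  · have := hs.apply_top hn (q := 3) (by omega) (by omega)
    omega

lemma eq_of_apply_eq_bottom (hs : IsPosSurjection n m s) (hn : 1 ≤ n) (hk : s k = 2*m+3+i)
    (hi : i ≤ 2) : k = 2*n+3+i := by
  obtain ⟨u, hu⟩ := hs.exists_apply_eq (q := 2*m+3) (by omega)
  obtain ⟨v, hv⟩ := hs.exists_apply_eq (q := 2*m+4) (by omega)
  obtain ⟨w, hw⟩ := hs.exists_apply_eq (q := 2*m+5) (by omega)
  interval_cases i
  · exact (hs.eq_of_bottom_fence hn hk hv hw).1
  · exact (hs.eq_of_bottom_fence hn hu hk hw).2.1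
  · exact (hs.eq_of_bottom_fence hn hu hv hk).2.2

lemma apply_bottom (hs : IsPosSurjection n m s) (hn : 1 ≤ n) (hi : i ≤ 2) :
    s (2*n+3+i) = 2*m+3+i := by
  obtain ⟨k, hk⟩ := hs.exists_apply_eq (q := 2*m+3+i) (by omega)
  obtain rfl := hs.eq_of_apply_eq_bottom hn hk hi
  exact hk

lemma mem_middle (hs : IsPosSurjection n m s) (hn : 1 ≤ n) (h5 : 5 ≤ k) (h2 : k ≤ 2*n+2) :
    5 ≤ s k ∧ s k ≤ 2*m+2 := by
  have below := hs.posLe_map (show posLe n k 4 by unfold posLe IsGap; omega)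
  have above := hs.posLe_map (show posLe n (2*n+3) k by unfold posLe IsGap; omega)
  rw [hs.apply_top hn (by omega) le_rfl] at below
  rw [hs.apply_bottom hn (i := 0) (by omega)] at above
  have h4 : s k ≠ 4 := fun hk => by have := hs.eq_of_apply_eq_top hn hk; omega
  have h3 : s k ≠ 2*m+3 := fun hk => by have := hs.eq_of_apply_eq_bottom hn (i := 0) hk; omega
  unfold posLe at below above
  omega

lemma eq_of_apply_eq_middle (hs : IsPosSurjection n m s) (hn : 1 ≤ n) (h : s k = s k')
    (h5 : 5 ≤ s k) (h2 : s k ≤ 2*m+2) : k = k' := by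
  by_contra hne
  -- `q` is the partner of `s k` in its incomparable pair `{2a+1, 2a+2}` of `F_m`
  obtain ⟨q, hq5, hq2, hadj⟩ : ∃ q, 5 ≤ q ∧ q ≤ 2*m+2 ∧ GapAdj m (s k) q :=
    ⟨if s k % 2 = 1 then s k + 1 else s k - 1, by split_ifs <;> omega, by split_ifs <;> omega,
      by unfold GapAdj IsGap; split_ifs <;> omega⟩
  obtain ⟨v, rfl⟩ := hs.exists_apply_eq (q := q) (by omega)
  rcases GapAdj.eq_of_two_neighbors hn (hs.gapAdj hn hadj) (hs.gapAdj hn (h ▸ hadj)) hne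
    with rfl | rfl | rfl
  · rw [hs.apply_top hn (by omega) (by omega)] at hq5
    omega
  · rw [hs.apply_top hn (by omega) (by omega)] at hq5
    omega
  · rw [hs.apply_bottom hn (i := 1) (by omega)] at hq2
    omega

lemma le_of_one_le (hs : IsPosSurjection n m s) (hn : 1 ≤ n) : n ≤ m := by
  have hm := hs.one_le hn
  have := Finset.card_le_card_of_injOn s (s := Finset.Icc 5 (2*n+2)) (t := Finset.Icc 5 (2*m+2))
    (fun k hk => by
      simp only [Finset.coe_Icc, Set.mem_Icc] at hk ⊢
      exact hs.mem_middle hn hk.1 hk.2)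
    (fun k hk k' _ h => by
      simp only [Finset.coe_Icc, Set.mem_Icc] at hk
      have := hs.mem_middle hn hk.1 hk.2
      exact hs.eq_of_apply_eq_middle hn h this.1 this.2)
  simp only [Nat.card_Icc] at this
  omega

theorem eq (hs : IsPosSurjection n m s) : n = m := by
  rcases Nat.eq_zero_or_pos n with rfl | hn
  · exact (Nat.le_zero.mp hs.le).symm
  · exact le_antisymm (hs.le_of_one_le hn) hs.le

end IsPosSurjection

/-- For `n ≠ m` there is no surjective order-preserving map from `F_n` onto `F_m`;
hence the family `{F_n}` is an antichain with respect to
"is an order-preserving image of". -/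
theorem stmt0 (n m : ℕ) (hnm : n ≠ m) :
    ¬ ∃ f : FCarrier n → FCarrier m,
        Function.Surjective f ∧
        (∀ a b : FCarrier n, FLe n a.1 b.1 → FLe m (f a).1 (f b).1) := by
  rintro ⟨f, hf, hmono⟩
  exact hnm (isPosSurjection_of_surjective hf hmono).eq
end

section
/- Let (W, ≤) be a partially ordered set and let N be a function mapping upward-closed subsets of W to upward-closed subsets of W. Then the following are equivalent: (i) N(X) ∩ Y = N(X ∩ Y) ∩ Y for all upward-closed subsets X, Y ⊆ W; (ii) for every w ∈ W and every upward-closed X ⊆ W, w ∈ N(X) if and only if w ∈ N(X ∩ R(w)). -/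
def IsUpset {W : Type*} (le : W → W → Prop) (X : Set W) : Prop :=
  ∀ ⦃w v : W⦄, le w v → w ∈ X → v ∈ X

/-! Taking `Y = R(w)` in (i) and evaluating at `w` gives (ii). Conversely, for `v ∈ Y` the upset `Y`
contains `R(v)`, so `X ∩ R(v) = (X ∩ Y) ∩ R(v)` and (ii) identifies membership of `v` in `N X` and
`N (X ∩ Y)`. -/

open Set

theorem isUpset_le_iff_isUpperSet {W : Type*} [Preorder W] {X : Set W} :
    IsUpset (· ≤ ·) X ↔ IsUpperSet X :=
  Iff.rfl

theorem IsUpperSet.inter_inter_Ici_of_mem {W : Type*} [Preorder W] {X Y : Set W} {w : W}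
    (hY : IsUpperSet Y) (hw : w ∈ Y) : X ∩ Y ∩ Ici w = X ∩ Ici w := by
  ext v
  simp only [mem_inter_iff, mem_Ici, and_congr_left_iff, and_iff_left_iff_imp]
  exact fun hwv _ => hY hwv hw

theorem stmt2_general {W : Type*} [PartialOrder W] (N : Set W → Set W) :
    (∀ X Y : Set W, IsUpset (· ≤ ·) X → IsUpset (· ≤ ·) Y →
        N X ∩ Y = N (X ∩ Y) ∩ Y) ↔
    (∀ (w : W) (X : Set W), IsUpset (· ≤ ·) X →
        (w ∈ N X ↔ w ∈ N (X ∩ Set.Ici w))) := by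
  simp only [isUpset_le_iff_isUpperSet]
  constructor
  · intro hlocal w X hX
    simpa using Set.ext_iff.mp (hlocal X (Ici w) hX (isUpperSet_Ici w)) w
  · intro hpoint X Y hX hY
    ext v
    simp only [mem_inter_iff, and_congr_left_iff]
    intro hv
    rw [hpoint v X hX, hpoint v (X ∩ Y) (hX.inter hY), hY.inter_inter_Ici_of_mem hv]

/-- The locality condition `N(X) ∩ Y = N(X ∩ Y) ∩ Y` (for upsets) is equivalent to
`w ∈ N(X) ↔ w ∈ N(X ∩ R(w))` for every point `w` and upset `X`. -/
theorem stmt2 {W : Type*} [PartialOrder W] (N : Set W → Set W)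
    (hN : ∀ X : Set W, IsUpset (· ≤ ·) X → IsUpset (· ≤ ·) (N X)) :
    (∀ X Y : Set W, IsUpset (· ≤ ·) X → IsUpset (· ≤ ·) Y →
        N X ∩ Y = N (X ∩ Y) ∩ Y) ↔
    (∀ (w : W) (X : Set W), IsUpset (· ≤ ·) X →
        (w ∈ N X ↔ w ∈ N (X ∩ Set.Ici w))) :=
  stmt2_general N
end

section
/- Let (W, ≤) be a partially ordered set. (i) If N is a function from upsets of W to upsets of W satisfying N(X) ∩ Y = N(X ∩ Y) ∩ Y for all upsets X, Y, then the function 𝔫 defined by 𝔫(w) = {X an upset of W : w ∈ N(X)} is monotone (w ≤ v implies 𝔫(w) ⊆ 𝔫(v)) and satisfies: X ∈ 𝔫(w) if and only if X ∩ R(w) ∈ 𝔫(w), for every upset X and every w ∈ W. (ii) Conversely, if 𝔫 assigns to each w ∈ W a collection of upsets of W, is monotone, and satisfies X ∈ 𝔫(w) iff X ∩ R(w) ∈ 𝔫(w) for every upset X, then N defined by N(X) = {w ∈ W : X ∈ 𝔫(w)} maps upsets to upsets and satisfies N(X) ∩ Y = N(X ∩ Y) ∩ Y for all upsets X, Y.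 (iii) The two constructions are mutually inverse. -/
def toNbhd {W : Type*} [PartialOrder W] (N : Set W → Set W) : W → Set (Set W) :=
  fun w => {X | IsUpset (· ≤ ·) X ∧ w ∈ N X}

def toN {W : Type*} (n : W → Set (Set W)) : Set W → Set W :=
  fun X => {w | X ∈ n w}

-- `IsUpset (· ≤ ·)` unfolds to Mathlib's `IsUpperSet`, whose lemmas are used below by defeq.
theorem inter_Ici_eq_inter_inter_Ici {W : Type*} [Preorder W] {X Y : Set W} {w : W}
    (hY : IsUpperSet Y) (hw : w ∈ Y) : X ∩ Set.Ici w = X ∩ Y ∩ Set.Ici w := by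
  rw [Set.inter_assoc, Set.inter_eq_right.mpr (hY.Ici_subset hw)]

section OfN

variable {W : Type*} [PartialOrder W] {N : Set W → Set W}

theorem toNbhd_mono (hup : ∀ X, IsUpset (· ≤ ·) X → IsUpset (· ≤ ·) (N X)) {w v : W}
    (hwv : w ≤ v) : toNbhd N w ⊆ toNbhd N v :=
  fun _ ⟨hX, hw⟩ => ⟨hX, hup _ hX hwv hw⟩

theorem mem_toNbhd_iff_inter_Ici
    (hloc : ∀ X Y : Set W, IsUpset (· ≤ ·) X → IsUpset (· ≤ ·) Y → N X ∩ Y = N (X ∩ Y) ∩ Y)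
    {w : W} {X : Set W} (hX : IsUpset (· ≤ ·) X) :
    X ∈ toNbhd N w ↔ X ∩ Set.Ici w ∈ toNbhd N w := by
  have hIci : IsUpset (· ≤ ·) (Set.Ici w) := isUpperSet_Ici w
  have hXIci : IsUpset (· ≤ ·) (X ∩ Set.Ici w) := IsUpperSet.inter hX hIci
  have key : w ∈ N X ∩ Set.Ici w ↔ w ∈ N (X ∩ Set.Ici w) ∩ Set.Ici w := by
    rw [hloc X _ hX hIci]
  change (_ ∧ _) ↔ (_ ∧ _)
  rw [and_iff_right hX, and_iff_right hXIci]
  simpa only [Set.mem_inter_iff, Set.mem_Ici, le_refl, and_true] using key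

theorem toN_toNbhd {X : Set W} (hX : IsUpset (· ≤ ·) X) : toN (toNbhd N) X = N X := by
  ext w
  exact and_iff_right hX

end OfN

section OfNbhd

variable {W : Type*} [Preorder W] {n : W → Set (Set W)}

theorem isUpset_toN (hmono : ∀ w v : W, w ≤ v → n w ⊆ n v) (X : Set W) :
    IsUpset (· ≤ ·) (toN n X) :=
  fun w v hwv hw => hmono w v hwv hw

theorem toN_inter_eq_toN_inter_inter
    (hloc : ∀ (w : W) (X : Set W), IsUpset (· ≤ ·) X → (X ∈ n w ↔ X ∩ Set.Ici w ∈ n w))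
    {X Y : Set W} (hX : IsUpset (· ≤ ·) X) (hY : IsUpset (· ≤ ·) Y) :
    toN n X ∩ Y = toN n (X ∩ Y) ∩ Y := by
  ext w
  refine and_congr_left fun hw => ?_
  change X ∈ n w ↔ X ∩ Y ∈ n w
  rw [hloc w X hX, hloc w (X ∩ Y) (IsUpperSet.inter hX hY),
    inter_Ici_eq_inter_inter_Ici hY hw]

end OfNbhd

theorem toNbhd_toN {W : Type*} [PartialOrder W] {n : W → Set (Set W)}
    (hup : ∀ (w : W) (X : Set W), X ∈ n w → IsUpset (· ≤ ·) X) (w : W) :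
    toNbhd (toN n) w = n w := by
  ext X
  exact and_iff_right_of_imp (hup w X)

/-- Correspondence between N-functions on upsets satisfying locality and monotone
neighbourhood functions on upsets satisfying `X ∈ 𝔫(w) ↔ X ∩ R(w) ∈ 𝔫(w)`;
the two constructions are mutually inverse. -/
theorem stmt3 {W : Type*} [PartialOrder W] :
    (∀ N : Set W → Set W,
      (∀ X, IsUpset (· ≤ ·) X → IsUpset (· ≤ ·) (N X)) →
      (∀ X Y : Set W, IsUpset (· ≤ ·) X → IsUpset (· ≤ ·) Y →
          N X ∩ Y = N (X ∩ Y) ∩ Y) →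
      ((∀ w v : W, w ≤ v → toNbhd N w ⊆ toNbhd N v) ∧
       (∀ (w : W) (X : Set W), IsUpset (· ≤ ·) X →
          (X ∈ toNbhd N w ↔ X ∩ Set.Ici w ∈ toNbhd N w)))) ∧
    (∀ n : W → Set (Set W),
      (∀ (w : W) (X : Set W), X ∈ n w → IsUpset (· ≤ ·) X) →
      (∀ w v : W, w ≤ v → n w ⊆ n v) →
      (∀ (w : W) (X : Set W), IsUpset (· ≤ ·) X → (X ∈ n w ↔ X ∩ Set.Ici w ∈ n w)) →
      ((∀ X, IsUpset (· ≤ ·) X → IsUpset (· ≤ ·) (toN n X)) ∧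
       (∀ X Y : Set W, IsUpset (· ≤ ·) X → IsUpset (· ≤ ·) Y →
          toN n X ∩ Y = toN n (X ∩ Y) ∩ Y))) ∧
    (∀ N : Set W → Set W,
      (∀ X, IsUpset (· ≤ ·) X → IsUpset (· ≤ ·) (N X)) →
      (∀ X Y : Set W, IsUpset (· ≤ ·) X → IsUpset (· ≤ ·) Y →
          N X ∩ Y = N (X ∩ Y) ∩ Y) →
      ∀ X, IsUpset (· ≤ ·) X → toN (toNbhd N) X = N X) ∧
    (∀ n : W → Set (Set W),
      (∀ (w : W) (X : Set W), X ∈ n w → IsUpset (· ≤ ·) X) →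
      (∀ w v : W, w ≤ v → n w ⊆ n v) →
      (∀ (w : W) (X : Set W), IsUpset (· ≤ ·) X → (X ∈ n w ↔ X ∩ Set.Ici w ∈ n w)) →
      ∀ w, toNbhd (toN n) w = n w) :=
  ⟨fun _ hup hloc => ⟨fun _ _ => toNbhd_mono hup, fun _ _ => mem_toNbhd_iff_inter_Ici hloc⟩,
    fun _ _ hmono hloc => ⟨fun X _ => isUpset_toN hmono X,
      fun _ _ => toN_inter_eq_toN_inter_inter hloc⟩,
    fun _ _ _ _ => toN_toNbhd,
    fun _ hup _ _ => toNbhd_toN hup⟩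
end

section
/- Let F = (W, ≤, N) be an N-frame and let p, q be distinct propositional variables. Then F ⊨ (p ∧ ¬p) → ¬q if and only if X ∩ N(X) ⊆ N(Y) for all upward-closed subsets X, Y of W. -/
inductive Form : Type
  | var : ℕ → Form
  | top : Form
  | and : Form → Form → Form
  | or : Form → Form → Form
  | imp : Form → Form → Form
  | neg : Form → Form

def Sat {W : Type*} (le : W → W → Prop) (N : Set W → Set W) (V : ℕ → Set W) : Form → Set W
  | .var p => V p
  | .top => Set.univ
  | .and φ ψ => Sat le N V φ ∩ Sat le N V ψ
  | .or φ ψ => Sat le N V φ ∪ Sat le N V ψ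
  | .imp φ ψ => {w | ∀ v, le w v → v ∈ Sat le N V φ → v ∈ Sat le N V ψ}
  | .neg φ => N (Sat le N V φ)

def ValidOn {W : Type*} (le : W → W → Prop) (N : Set W → Set W) (φ : Form) : Prop :=
  ∀ V : ℕ → Set W, (∀ p, IsUpset le (V p)) → ∀ w, w ∈ Sat le N V φ

theorem isUpset_update {W : Type*} {le : W → W → Prop} {V : ℕ → Set W}
    (hV : ∀ n, IsUpset le (V n)) (p : ℕ) {X : Set W} (hX : IsUpset le X) :
    ∀ n, IsUpset le (Function.update V p X n) := by
  intro n
  rcases eq_or_ne n p with rfl | hn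
  · simpa only [Function.update_self] using hX
  · simpa only [Function.update_of_ne hn] using hV n

theorem stmt4_general {W : Type*} (le : W → W → Prop)
    (hrefl : ∀ w, le w w)
    (N : Set W → Set W)
    (p q : ℕ) (hpq : p ≠ q) :
    ValidOn le N (((Form.var p).and ((Form.var p).neg)).imp ((Form.var q).neg)) ↔
      ∀ X Y : Set W, IsUpset le X → IsUpset le Y → X ∩ N X ⊆ N Y := by
  constructor
  · intro hvalid X Y hX hY w hw
    let V : ℕ → Set W := Function.update (fun _ => Y) p X
    have hVp : V p = X := Function.update_self ..
    have hVq : V q = Y := Function.update_of_ne hpq.symm ..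
    have hw' := hvalid V (isUpset_update (fun _ => hY) p hX) w w (hrefl w)
    simp only [Sat, hVp, hVq] at hw'
    exact hw' hw
  · rintro hNX V hV w v - hv
    exact hNX (V p) (V q) (hV p) (hV q) hv

/-- `F ⊨ (p ∧ ¬p) → ¬q` iff `X ∩ N(X) ⊆ N(Y)` for all upsets `X, Y`. -/
theorem stmt4 {W : Type*} (le : W → W → Prop)
    (hrefl : ∀ w, le w w)
    (htrans : ∀ a b c, le a b → le b c → le a c)
    (hanti : ∀ a b, le a b → le b a → a = b)
    (N : Set W → Set W)
    (hNup : ∀ X, IsUpset le X → IsUpset le (N X))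
    (hNloc : ∀ X Y, IsUpset le X → IsUpset le Y → N X ∩ Y = N (X ∩ Y) ∩ Y)
    (p q : ℕ) (hpq : p ≠ q) :
    ValidOn le N (((Form.var p).and ((Form.var p).neg)).imp ((Form.var q).neg)) ↔
      ∀ X Y : Set W, IsUpset le X → IsUpset le Y → X ∩ N X ⊆ N Y :=
  stmt4_general le hrefl N p q hpq
end

section
/- Let F = (W, ≤, N) be an N-frame and let p, q be distinct propositional variables. Then F ⊨ (p → q) → (¬q → ¬p) if and only if N is antitone on upsets, i.e., for all upward-closed X, Y ⊆ W, X ⊆ Y implies N(Y) ⊆ N(X). -/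
/-!
If `N` is antitone, let `p → q` hold at `v` and `¬q` at some `u ≥ v`. On the principal upset `↑u`
the truth set of `p` is contained in that of `q`. Locality of `N` turns `u ∈ N (V q)` into
`u ∈ N (V q ∩ ↑u)`, antitonicity gives `u ∈ N (V p ∩ ↑u)`, and locality again gives `u ∈ N (V p)`.
Conversely, for upsets `X ⊆ Y`, evaluate the formula at a point of `N Y` under `p ↦ X`, `q ↦ Y`.
-/

section Upsets

variable {W : Type*} {le : W → W → Prop}

theorem IsUpset.inter {X Y : Set W} (hX : IsUpset le X) (hY : IsUpset le Y) :
    IsUpset le (X ∩ Y) :=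
  fun _ _ hwv hw => ⟨hX hwv hw.1, hY hwv hw.2⟩

theorem isUpset_setOf_le (htrans : ∀ a b c, le a b → le b c → le a c) (u : W) :
    IsUpset le {x | le u x} :=
  fun a b hab hua => htrans u a b hua hab

end Upsets

def AntitoneOnUpsets {W : Type*} (le : W → W → Prop) (N : Set W → Set W) : Prop :=
  ∀ X Y : Set W, IsUpset le X → IsUpset le Y → X ⊆ Y → N Y ⊆ N X

theorem AntitoneOnUpsets.inter_subset {W : Type*} {le : W → W → Prop} {N : Set W → Set W}
    (hN : AntitoneOnUpsets le N)
    (hNloc : ∀ X Y, IsUpset le X → IsUpset le Y → N X ∩ Y = N (X ∩ Y) ∩ Y)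
    {X Y U : Set W} (hX : IsUpset le X) (hY : IsUpset le Y) (hU : IsUpset le U)
    (hXY : X ∩ U ⊆ Y ∩ U) : N Y ∩ U ⊆ N X ∩ U := by
  rw [hNloc Y U hY hU, hNloc X U hX hU]
  exact Set.inter_subset_inter_left U (hN _ _ (hX.inter hU) (hY.inter hU) hXY)

def Form.contraposition (p q : ℕ) : Form :=
  ((Form.var p).imp (Form.var q)).imp (((Form.var q).neg).imp ((Form.var p).neg))

section Contraposition

variable {W : Type*} {le : W → W → Prop} {N : Set W → Set W}

theorem antitoneOnUpsets_of_validOn_contraposition (hrefl : ∀ w, le w w) {p q : ℕ} (hpq : p ≠ q)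
    (hvalid : ValidOn le N (Form.contraposition p q)) : AntitoneOnUpsets le N := by
  intro X Y hX hY hXY w hw
  let V : ℕ → Set W := fun n => if n = p then X else Y
  have hVp : V p = X := if_pos rfl
  have hVq : V q = Y := if_neg hpq.symm
  have hVup : ∀ n, IsUpset le (V n) := fun n => by
    dsimp only [V]
    split_ifs <;> assumption
  rw [← hVp]
  refine hvalid V hVup w w (hrefl w) (fun v _ hv => ?_) w (hrefl w) ?_
  · show v ∈ V q
    rw [hVq]
    exact hXY (hVp ▸ (hv : v ∈ V p))
  · show w ∈ N (V q)
    rwa [hVq]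

theorem AntitoneOnUpsets.validOn_contraposition (hrefl : ∀ w, le w w)
    (htrans : ∀ a b c, le a b → le b c → le a c)
    (hNloc : ∀ X Y, IsUpset le X → IsUpset le Y → N X ∩ Y = N (X ∩ Y) ∩ Y)
    (hN : AntitoneOnUpsets le N) (p q : ℕ) : ValidOn le N (Form.contraposition p q) := by
  intro V hVup w v _ himp u hvu hu
  have hsub : V p ∩ {x | le u x} ⊆ V q ∩ {x | le u x} :=
    fun x ⟨hxp, hux⟩ => ⟨himp x (htrans v u x hvu hux) hxp, hux⟩
  exact (hN.inter_subset hNloc (hVup p) (hVup q) (isUpset_setOf_le htrans u) hsub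
    ⟨hu, hrefl u⟩).1

end Contraposition

theorem stmt5_general {W : Type*} (le : W → W → Prop)
    (hrefl : ∀ w, le w w)
    (htrans : ∀ a b c, le a b → le b c → le a c)
    (N : Set W → Set W)
    (hNloc : ∀ X Y, IsUpset le X → IsUpset le Y → N X ∩ Y = N (X ∩ Y) ∩ Y)
    (p q : ℕ) (hpq : p ≠ q) :
    ValidOn le N (((Form.var p).imp (Form.var q)).imp
        (((Form.var q).neg).imp ((Form.var p).neg))) ↔
      ∀ X Y : Set W, IsUpset le X → IsUpset le Y → X ⊆ Y → N Y ⊆ N X :=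
  ⟨antitoneOnUpsets_of_validOn_contraposition hrefl hpq,
    fun hN => AntitoneOnUpsets.validOn_contraposition hrefl htrans hNloc hN p q⟩

/-- `F ⊨ (p → q) → (¬q → ¬p)` iff `N` is antitone on upsets. -/
theorem stmt5 {W : Type*} (le : W → W → Prop)
    (hrefl : ∀ w, le w w)
    (htrans : ∀ a b c, le a b → le b c → le a c)
    (hanti : ∀ a b, le a b → le b a → a = b)
    (N : Set W → Set W)
    (hNup : ∀ X, IsUpset le X → IsUpset le (N X))
    (hNloc : ∀ X Y, IsUpset le X → IsUpset le Y → N X ∩ Y = N (X ∩ Y) ∩ Y)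
    (p q : ℕ) (hpq : p ≠ q) :
    ValidOn le N (((Form.var p).imp (Form.var q)).imp
        (((Form.var q).neg).imp ((Form.var p).neg))) ↔
      ∀ X Y : Set W, IsUpset le X → IsUpset le Y → X ⊆ Y → N Y ⊆ N X :=
  stmt5_general le hrefl htrans N hNloc p q hpq
end

section
/- Filtration Theorem: Let M = (W, ≤, N, V) be an N-model and let M* = (W*, ≤*, N*, V*) be a filtration of M through a finite set Σ of formulas closed under subformulas. Then for each φ ∈ Σ and each w ∈ W: M, w ⊨ φ if and only if M*, [w] ⊨ φ. -/
def SubClosed (S : Set Form) : Prop :=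
  (∀ φ ψ : Form, φ.and ψ ∈ S → φ ∈ S ∧ ψ ∈ S) ∧
  (∀ φ ψ : Form, φ.or ψ ∈ S → φ ∈ S ∧ ψ ∈ S) ∧
  (∀ φ ψ : Form, φ.imp ψ ∈ S → φ ∈ S ∧ ψ ∈ S) ∧
  (∀ φ : Form, φ.neg ∈ S → φ ∈ S)

structure IsNFiltration {W Wstar : Type*} (le : W → W → Prop) (N : Set W → Set W)
    (V : ℕ → Set W) (S : Set Form) (π : W → Wstar)
    (les : Wstar → Wstar → Prop) (Ns : Set Wstar → Set Wstar) (Vs : ℕ → Set Wstar) : Prop where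
  refl : ∀ a, les a a
  trans : ∀ a b c, les a b → les b c → les a c
  antisymm : ∀ a b, les a b → les b a → a = b
  nup : ∀ X, IsUpset les X → IsUpset les (Ns X)
  nloc : ∀ X Y, IsUpset les X → IsUpset les Y → Ns X ∩ Y = Ns (X ∩ Y) ∩ Y
  vup : ∀ p, IsUpset les (Vs p)
  vdef : ∀ p, Form.var p ∈ S → Vs p = π '' (V p)
  monoPi : ∀ w v, le w v → les (π w) (π v)
  back : ∀ φ ∈ S, ∀ w v, les (π w) (π v) → w ∈ Sat le N V φ → v ∈ Sat le N V φ
  nc : ∀ X, IsUpset les X → ∀ w, π w ∈ Ns X → w ∈ N (π ⁻¹' X)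
  nd : ∀ ψ : Form, ψ.neg ∈ S → ∀ w, w ∈ N (Sat le N V ψ) → π w ∈ Ns (π '' (Sat le N V ψ))

/-! Induction on `φ ∈ Σ`, proving `V(φ) = π⁻¹(V*(φ))`. Variables use (b) with reflexivity of `≤*`;
implication uses (a) one way and (b) plus reflexivity of `≤` the other way; for negation,
surjectivity of `π` gives `π[V(φ)] = V*(φ)`, so (d) and (c) are exactly the two inclusions. -/

theorem isUpset_sat {W : Type*} {le : W → W → Prop} {N : Set W → Set W} {V : ℕ → Set W}
    (htrans : ∀ a b c, le a b → le b c → le a c)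
    (hNup : ∀ X, IsUpset le X → IsUpset le (N X)) (hV : ∀ p, IsUpset le (V p)) :
    ∀ φ : Form, IsUpset le (Sat le N V φ)
  | .var p => hV p
  | .top => fun _ _ _ _ => trivial
  | .and φ ψ => fun _ _ h hw =>
      ⟨isUpset_sat htrans hNup hV φ h hw.1, isUpset_sat htrans hNup hV ψ h hw.2⟩
  | .or φ ψ => fun _ _ h hw =>
      hw.imp (isUpset_sat htrans hNup hV φ h) (isUpset_sat htrans hNup hV ψ h)
  | .imp _ _ => fun _ _ h hw u hu => hw u (htrans _ _ _ h hu)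
  | .neg φ => hNup _ (isUpset_sat htrans hNup hV φ)

namespace IsNFiltration

variable {W Wstar : Type*} {le : W → W → Prop} {N : Set W → Set W} {V : ℕ → Set W}
  {S : Set Form} {π : W → Wstar} {les : Wstar → Wstar → Prop} {Ns : Set Wstar → Set Wstar}
  {Vs : ℕ → Set Wstar}

theorem isUpset_sat (hfil : IsNFiltration le N V S π les Ns Vs) (φ : Form) :
    IsUpset les (Sat les Ns Vs φ) :=
  _root_.isUpset_sat hfil.trans hfil.nup hfil.vup φ

theorem preimage_vs (hfil : IsNFiltration le N V S π les Ns Vs) {p : ℕ} (hp : Form.var p ∈ S) :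
    π ⁻¹' Vs p = V p := by
  ext w
  rw [Set.mem_preimage, hfil.vdef p hp]
  refine ⟨?_, fun hw => ⟨w, hw, rfl⟩⟩
  rintro ⟨v, hv, hvw⟩
  exact hfil.back _ hp v w (hvw ▸ hfil.refl _) hv

theorem preimage_ns_sat (hfil : IsNFiltration le N V S π les Ns Vs)
    (hπsurj : Function.Surjective π) {φ : Form} (hφ : φ.neg ∈ S)
    (ih : Sat le N V φ = π ⁻¹' Sat les Ns Vs φ) :
    π ⁻¹' Ns (Sat les Ns Vs φ) = N (Sat le N V φ) := by
  have himage : π '' Sat le N V φ = Sat les Ns Vs φ := by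
    rw [ih, Set.image_preimage_eq _ hπsurj]
  ext w
  refine ⟨fun hw => ih ▸ hfil.nc _ (hfil.isUpset_sat φ) w hw, fun hw => ?_⟩
  simpa only [Set.mem_preimage, himage] using hfil.nd φ hφ w hw

theorem sat_eq_preimage (hfil : IsNFiltration le N V S π les Ns Vs) (hrefl : ∀ w, le w w)
    (hπsurj : Function.Surjective π) (hS : SubClosed S) :
    ∀ φ ∈ S, Sat le N V φ = π ⁻¹' Sat les Ns Vs φ := by
  obtain ⟨hSand, hSor, hSimp, hSneg⟩ := hS
  intro φ hφ
  induction φ with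
  | var p => exact (hfil.preimage_vs hφ).symm
  | top => rfl
  | and φ ψ ihφ ihψ =>
    obtain ⟨hφ', hψ'⟩ := hSand φ ψ hφ
    simp only [Sat, Set.preimage_inter, ← ihφ hφ', ← ihψ hψ']
  | or φ ψ ihφ ihψ =>
    obtain ⟨hφ', hψ'⟩ := hSor φ ψ hφ
    simp only [Sat, Set.preimage_union, ← ihφ hφ', ← ihψ hψ']
  | imp φ ψ ihφ ihψ =>
    obtain ⟨hφ', hψ'⟩ := hSimp φ ψ hφ
    ext w
    constructor
    · intro hw x hwx hx
      obtain ⟨v, rfl⟩ := hπsurj x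
      have hv : v ∈ Sat le N V (φ.imp ψ) := hfil.back _ hφ w v hwx hw
      rw [← Set.mem_preimage, ← ihψ hψ']
      exact hv v (hrefl v) (by rwa [ihφ hφ'])
    · intro hw v hwv hv
      rw [ihφ hφ'] at hv
      rw [ihψ hψ']
      exact hw (π v) (hfil.monoPi w v hwv) hv
  | neg φ ih => exact (hfil.preimage_ns_sat hπsurj hφ (ih (hSneg φ hφ))).symm

end IsNFiltration

theorem stmt8_general {W Wstar : Type*}
    (le : W → W → Prop)
    (hrefl : ∀ w, le w w)
    (N : Set W → Set W)
    (V : ℕ → Set W)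
    (S : Set Form) (hSsub : SubClosed S)
    (π : W → Wstar) (hπsurj : Function.Surjective π)
    (les : Wstar → Wstar → Prop) (Ns : Set Wstar → Set Wstar) (Vs : ℕ → Set Wstar)
    (hfil : IsNFiltration le N V S π les Ns Vs) :
    ∀ φ ∈ S, ∀ w : W, w ∈ Sat le N V φ ↔ π w ∈ Sat les Ns Vs φ := fun φ hφ =>
  Set.ext_iff.mp (hfil.sat_eq_preimage hrefl hπsurj hSsub φ hφ)

/-- Filtration Theorem: truth of formulas in `Σ` is preserved and reflected
by any filtration. -/
theorem stmt8 {W Wstar : Type*}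
    (le : W → W → Prop)
    (hrefl : ∀ w, le w w)
    (htrans : ∀ a b c, le a b → le b c → le a c)
    (hanti : ∀ a b, le a b → le b a → a = b)
    (N : Set W → Set W)
    (hNup : ∀ X, IsUpset le X → IsUpset le (N X))
    (hNloc : ∀ X Y, IsUpset le X → IsUpset le Y → N X ∩ Y = N (X ∩ Y) ∩ Y)
    (V : ℕ → Set W) (hV : ∀ p, IsUpset le (V p))
    (S : Set Form) (hSfin : S.Finite) (hSsub : SubClosed S)
    (π : W → Wstar) (hπsurj : Function.Surjective π)
    (hπ : ∀ w v : W, π w = π v ↔ ∀ φ ∈ S, (w ∈ Sat le N V φ ↔ v ∈ Sat le N V φ))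
    (les : Wstar → Wstar → Prop) (Ns : Set Wstar → Set Wstar) (Vs : ℕ → Set Wstar)
    (hfil : IsNFiltration le N V S π les Ns Vs) :
    ∀ φ ∈ S, ∀ w : W, w ∈ Sat le N V φ ↔ π w ∈ Sat les Ns Vs φ :=
  stmt8_general le hrefl N V S hSsub π hπsurj les Ns Vs hfil
end

section
/- Soundness and completeness of NS4: For every formula φ of the bi-modal language L□, NS4 ⊢ φ if and only if φ is valid on every N-frame for NS4. -/
inductive MForm : Type
  | var : ℕ → MForm
  | bot : MForm
  | top : MForm
  | and : MForm → MForm → MForm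
  | or : MForm → MForm → MForm
  | imp : MForm → MForm → MForm
  | box : MForm → MForm
  | bbox : MForm → MForm

def MForm.miff (φ ψ : MForm) : MForm := (φ.imp ψ).and (ψ.imp φ)

def MTaut (φ : MForm) : Prop :=
  ∀ v : MForm → Bool,
    v MForm.bot = false → v MForm.top = true →
    (∀ a b : MForm, v (a.and b) = (v a && v b)) →
    (∀ a b : MForm, v (a.or b) = (v a || v b)) →
    (∀ a b : MForm, v (a.imp b) = (!(v a) || v b)) →
    v φ = true

inductive NS4 : MForm → Prop
  | taut : ∀ {φ : MForm}, MTaut φ → NS4 φ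
  | axK : ∀ φ ψ : MForm, NS4 (((φ.imp ψ).box).imp ((φ.box).imp (ψ.box)))
  | axT : ∀ φ : MForm, NS4 ((φ.box).imp φ)
  | ax4 : ∀ φ : MForm, NS4 ((φ.box).imp (φ.box.box))
  | axN : ∀ φ ψ : MForm, NS4 (((φ.miff ψ).box).imp ((φ.bbox).miff (ψ.bbox)))
  | axB : ∀ φ : MForm, NS4 ((φ.bbox).imp (φ.bbox.box))
  | mp : ∀ {φ ψ : MForm}, NS4 (φ.imp ψ) → NS4 φ → NS4 ψ
  | nec : ∀ {φ : MForm}, NS4 φ → NS4 (φ.box)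

def MSat {W : Type*} (le : W → W → Prop) (N : Set W → Set W) (V : ℕ → Set W) : MForm → Set W
  | .var p => V p
  | .bot => ∅
  | .top => Set.univ
  | .and φ ψ => MSat le N V φ ∩ MSat le N V ψ
  | .or φ ψ => MSat le N V φ ∪ MSat le N V ψ
  | .imp φ ψ => {w | w ∈ MSat le N V φ → w ∈ MSat le N V ψ}
  | .box φ => {w | ∀ v, le w v → v ∈ MSat le N V φ}
  | .bbox φ => N (MSat le N V φ)

/-!
Soundness is checked axiom by axiom; the only non-routine case is `□(φ ↔ ψ) → (■φ ↔ ■ψ)`,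
which holds because whether `w ∈ N X` depends only on `X ∩ R(w)`.

Completeness goes through a canonical model on maximal consistent sets: `Γ ≤ Δ` when every
`ψ` with `□ψ ∈ Γ` lies in `Δ`, and `Γ ∈ N X` when `■ψ ∈ Γ` for some `ψ` whose truth set agrees
with `X` above `Γ`. Axiom `■φ → □■φ` makes `N X` upward closed, and the congruence axiom
for `■` gives the truth lemma for `■φ`: any such `ψ` satisfies `□(φ ↔ ψ) ∈ Γ`.
-/

open MForm

structure IsNFrame {W : Type*} (le : W → W → Prop) (N : Set W → Set W) : Prop where
  refl : ∀ w, le w w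
  trans : ∀ a b c, le a b → le b c → le a c
  isUpset_N : ∀ X : Set W, IsUpset le (N X)
  mem_N_iff_inter : ∀ (w : W) (X : Set W), w ∈ N X ↔ w ∈ N (X ∩ {v | le w v})

lemma IsNFrame.mem_N_congr {W : Type*} {le : W → W → Prop} {N : Set W → Set W}
    (hF : IsNFrame le N) {w : W} {X Y : Set W} (h : ∀ v, le w v → (v ∈ X ↔ v ∈ Y)) :
    w ∈ N X ↔ w ∈ N Y := by
  have hXY : X ∩ {v | le w v} = Y ∩ {v | le w v} := by
    ext v
    exact ⟨fun ⟨hX, hv⟩ => ⟨(h v hv).1 hX, hv⟩, fun ⟨hY, hv⟩ => ⟨(h v hv).2 hY, hv⟩⟩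
  rw [hF.mem_N_iff_inter w X, hF.mem_N_iff_inter w Y, hXY]

lemma MTaut.mem_mSat {W : Type*} (le : W → W → Prop) (N : Set W → Set W) (V : ℕ → Set W)
    {φ : MForm} (h : MTaut φ) (w : W) : w ∈ MSat le N V φ := by
  classical
  refine of_decide_eq_true (h (fun χ => decide (w ∈ MSat le N V χ)) ?_ ?_ ?_ ?_ ?_) <;>
    intros <;> simp [MSat, imp_iff_not_or]

theorem NS4.mem_mSat {W : Type*} {le : W → W → Prop} {N : Set W → Set W}
    (hF : IsNFrame le N) (V : ℕ → Set W) {φ : MForm} (h : NS4 φ) (w : W) :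
    w ∈ MSat le N V φ := by
  induction h generalizing w with
  | taut h => exact h.mem_mSat le N V w
  | axK φ ψ => exact fun hφψ hφ v hv => hφψ v hv (hφ v hv)
  | axT φ => exact fun hφ => hφ w (hF.refl w)
  | ax4 φ => exact fun hφ v hv u hu => hφ u (hF.trans _ _ _ hv hu)
  | axN φ ψ =>
    intro hφψ
    have hiff := hF.mem_N_congr fun v hv => ⟨(hφψ v hv).1, (hφψ v hv).2⟩
    exact ⟨hiff.1, hiff.2⟩
  | axB φ => exact fun hφ v hv => hF.isUpset_N _ hv hφ
  | mp _ _ ihφψ ihφ => exact ihφψ w (ihφ w)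
  | nec _ ih => exact fun v _ => ih v

namespace MTaut

variable (a b c : MForm)

lemma imp_self : MTaut (a.imp a) := fun v _ _ _ _ hi => by
  simp only [hi]; cases v a <;> rfl

lemma imp_intro : MTaut (a.imp (b.imp a)) := fun v _ _ _ _ hi => by
  simp only [hi]; cases v a <;> cases v b <;> rfl

lemma imp_distrib : MTaut ((a.imp (b.imp c)).imp ((a.imp b).imp (a.imp c))) :=
  fun v _ _ _ _ hi => by
    simp only [hi]; cases v a <;> cases v b <;> cases v c <;> rfl

lemma not_not_imp : MTaut (((a.imp bot).imp bot).imp a) := fun v hb _ _ _ hi => by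
  simp only [hi, hb]; cases v a <;> rfl

lemma not_imp_imp : MTaut ((a.imp bot).imp (a.imp b)) := fun v hb _ _ _ hi => by
  simp only [hi, hb]; cases v a <;> cases v b <;> rfl

lemma top : MTaut MForm.top := fun _ _ ht _ _ _ => ht

lemma and_intro : MTaut (a.imp (b.imp (a.and b))) := fun v _ _ ha _ hi => by
  simp only [hi, ha]; cases v a <;> cases v b <;> rfl

lemma and_left : MTaut ((a.and b).imp a) := fun v _ _ ha _ hi => by
  simp only [hi, ha]; cases v a <;> cases v b <;> rfl

lemma and_right : MTaut ((a.and b).imp b) := fun v _ _ ha _ hi => by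
  simp only [hi, ha]; cases v a <;> cases v b <;> rfl

lemma or_inl : MTaut (a.imp (a.or b)) := fun v _ _ _ ho hi => by
  simp only [hi, ho]; cases v a <;> cases v b <;> rfl

lemma or_inr : MTaut (b.imp (a.or b)) := fun v _ _ _ ho hi => by
  simp only [hi, ho]; cases v a <;> cases v b <;> rfl

lemma or_elim : MTaut ((a.imp c).imp ((b.imp c).imp ((a.or b).imp c))) :=
  fun v _ _ _ ho hi => by
    simp only [hi, ho]; cases v a <;> cases v b <;> cases v c <;> rfl

end MTaut

namespace NS4

inductive Derives (Γ : Set MForm) : MForm → Prop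
  | hyp {φ : MForm} : φ ∈ Γ → Derives Γ φ
  | thm {φ : MForm} : NS4 φ → Derives Γ φ
  | mp {φ ψ : MForm} : Derives Γ (φ.imp ψ) → Derives Γ φ → Derives Γ ψ

namespace Derives

variable {Γ Δ : Set MForm} {φ ψ : MForm}

lemma mono (hΓΔ : Γ ⊆ Δ) (h : Derives Γ φ) : Derives Δ φ := by
  induction h with
  | hyp hφ => exact hyp (hΓΔ hφ)
  | thm hφ => exact thm hφ
  | mp _ _ ihφψ ihφ => exact mp ihφψ ihφ

lemma of_taut (h : MTaut φ) : Derives Γ φ := thm (NS4.taut h)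

lemma imp_of_insert (h : Derives (insert φ Γ) ψ) : Derives Γ (φ.imp ψ) := by
  induction h with
  | hyp hχ =>
    rcases hχ with rfl | hχ
    · exact of_taut (MTaut.imp_self _)
    · exact mp (of_taut (MTaut.imp_intro _ _)) (hyp hχ)
  | thm hχ => exact mp (of_taut (MTaut.imp_intro _ _)) (thm hχ)
  | mp _ _ ihχρ ihχ => exact mp (mp (of_taut (MTaut.imp_distrib _ _ _)) ihχρ) ihχ

lemma of_insert_neg_bot (h : Derives (insert (φ.imp bot) Γ) bot) : Derives Γ φ :=
  mp (of_taut (MTaut.not_not_imp φ)) (imp_of_insert h)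

lemma box_image (h : Derives Γ φ) : Derives (box '' Γ) φ.box := by
  induction h with
  | hyp hφ => exact hyp ⟨_, hφ, rfl⟩
  | thm hφ => exact thm (NS4.nec hφ)
  | mp _ _ ihφψ ihφ => exact mp (mp (thm (NS4.axK _ _)) ihφψ) ihφ

lemma exists_of_sUnion {C : Set (Set MForm)} (hC : IsChain (· ⊆ ·) C) (hne : C.Nonempty)
    (h : Derives (⋃₀ C) φ) : ∃ Γ ∈ C, Derives Γ φ := by
  induction h with
  | hyp hφ =>
    obtain ⟨Γ, hΓ, hφ⟩ := hφ
    exact ⟨Γ, hΓ, hyp hφ⟩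
  | thm hφ => exact ⟨hne.some, hne.some_mem, thm hφ⟩
  | mp _ _ ihφψ ihφ =>
    obtain ⟨Γ₁, hΓ₁, h₁⟩ := ihφψ
    obtain ⟨Γ₂, hΓ₂, h₂⟩ := ihφ
    rcases hC.total hΓ₁ hΓ₂ with h₁₂ | h₂₁
    · exact ⟨Γ₂, hΓ₂, mp (h₁.mono h₁₂) h₂⟩
    · exact ⟨Γ₁, hΓ₁, mp h₁ (h₂.mono h₂₁)⟩

end Derives

theorem of_derives_empty {φ : MForm} (h : Derives ∅ φ) : NS4 φ := by
  induction h with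
  | hyp hφ => exact absurd hφ (Set.notMem_empty _)
  | thm hφ => exact hφ
  | mp _ _ ihφψ ihφ => exact NS4.mp ihφψ ihφ

def Consistent (Γ : Set MForm) : Prop := ¬ Derives Γ bot

theorem exists_maximal_consistent {Γ : Set MForm} (hΓ : Consistent Γ) :
    ∃ Δ, Γ ⊆ Δ ∧ Maximal Consistent Δ := by
  refine zorn_subset_nonempty {Δ | Consistent Δ} (fun C hCcons hC hne => ?_) Γ hΓ
  refine ⟨⋃₀ C, fun hbot => ?_, fun _ => Set.subset_sUnion_of_mem⟩
  obtain ⟨Δ, hΔ, hbot⟩ := Derives.exists_of_sUnion hC hne hbot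
  exact hCcons hΔ hbot

namespace MaximalConsistent

variable {Γ : Set MForm} (hΓ : Maximal Consistent Γ) {φ ψ : MForm}
include hΓ

lemma mem_of_derives (h : Derives Γ φ) : φ ∈ Γ := by
  have hcons : Consistent (insert φ Γ) := fun hbot =>
    hΓ.1 (Derives.mp (Derives.imp_of_insert hbot) h)
  exact hΓ.2 hcons (Set.subset_insert φ Γ) (Set.mem_insert φ Γ)

lemma mem_of_provable (h : NS4 φ) : φ ∈ Γ := mem_of_derives hΓ (.thm h)

lemma mp_mem (hφψ : φ.imp ψ ∈ Γ) (hφ : φ ∈ Γ) : ψ ∈ Γ :=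
  mem_of_derives hΓ (.mp (.hyp hφψ) (.hyp hφ))

lemma mem_of_provable_imp (h : NS4 (φ.imp ψ)) (hφ : φ ∈ Γ) : ψ ∈ Γ :=
  mp_mem hΓ (mem_of_provable hΓ h) hφ

lemma mem_of_taut_imp (h : MTaut (φ.imp ψ)) (hφ : φ ∈ Γ) : ψ ∈ Γ :=
  mem_of_provable_imp hΓ (.taut h) hφ

lemma bot_notMem : bot ∉ Γ := fun h => hΓ.1 (.hyp h)

lemma neg_mem_of_notMem (h : φ ∉ Γ) : φ.imp bot ∈ Γ := by
  refine mem_of_derives hΓ (Derives.imp_of_insert (by_contra fun hcons => h ?_))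
  exact hΓ.2 hcons (Set.subset_insert φ Γ) (Set.mem_insert φ Γ)

lemma imp_mem_iff : φ.imp ψ ∈ Γ ↔ (φ ∈ Γ → ψ ∈ Γ) := by
  refine ⟨mp_mem hΓ, fun h => ?_⟩
  by_cases hφ : φ ∈ Γ
  · exact mem_of_taut_imp hΓ (MTaut.imp_intro ψ φ) (h hφ)
  · exact mem_of_taut_imp hΓ (MTaut.not_imp_imp φ ψ) (neg_mem_of_notMem hΓ hφ)

lemma and_mem_iff : φ.and ψ ∈ Γ ↔ φ ∈ Γ ∧ ψ ∈ Γ :=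
  ⟨fun h => ⟨mem_of_taut_imp hΓ (MTaut.and_left φ ψ) h,
      mem_of_taut_imp hΓ (MTaut.and_right φ ψ) h⟩,
    fun ⟨hφ, hψ⟩ => mp_mem hΓ (mem_of_taut_imp hΓ (MTaut.and_intro φ ψ) hφ) hψ⟩

lemma or_mem_iff : φ.or ψ ∈ Γ ↔ φ ∈ Γ ∨ ψ ∈ Γ := by
  refine ⟨fun h => ?_, ?_⟩
  · by_contra! hnot
    have hφ := neg_mem_of_notMem hΓ hnot.1
    have hψ := neg_mem_of_notMem hΓ hnot.2
    exact bot_notMem hΓ <|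
      mp_mem hΓ (mp_mem hΓ (mem_of_taut_imp hΓ (MTaut.or_elim φ ψ bot) hφ) hψ) h
  · rintro (hφ | hψ)
    · exact mem_of_taut_imp hΓ (MTaut.or_inl φ ψ) hφ
    · exact mem_of_taut_imp hΓ (MTaut.or_inr φ ψ) hψ

lemma miff_mem_iff : φ.miff ψ ∈ Γ ↔ (φ ∈ Γ ↔ ψ ∈ Γ) := by
  rw [miff, and_mem_iff hΓ, imp_mem_iff hΓ, imp_mem_iff hΓ, ← iff_def]

end MaximalConsistent

theorem of_forall_maximalConsistent {φ : MForm} (h : ∀ Γ, Maximal Consistent Γ → φ ∈ Γ) :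
    NS4 φ := by
  by_contra hφ
  have hcons : Consistent {φ.imp bot} := fun hbot =>
    hφ <| of_derives_empty <| Derives.of_insert_neg_bot (Γ := ∅) (by simpa using hbot)
  obtain ⟨Δ, hsub, hΔ⟩ := exists_maximal_consistent hcons
  exact hΔ.1 (.mp (.hyp (hsub rfl)) (.hyp (h Δ hΔ)))

def CanonicalWorld : Type := {Γ : Set MForm // Maximal Consistent Γ}

namespace CanonicalWorld

open MaximalConsistent

def le (Γ Δ : CanonicalWorld) : Prop := ∀ ψ : MForm, ψ.box ∈ Γ.1 → ψ ∈ Δ.1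

def nbhd (X : Set CanonicalWorld) : Set CanonicalWorld :=
  {Γ | ∃ ψ : MForm, ψ.bbox ∈ Γ.1 ∧ ∀ Δ, le Γ Δ → (Δ ∈ X ↔ ψ ∈ Δ.1)}

def val (p : ℕ) : Set CanonicalWorld := {Γ | var p ∈ Γ.1}

lemma box_mem_iff (Γ : CanonicalWorld) (φ : MForm) :
    φ.box ∈ Γ.1 ↔ ∀ Δ, le Γ Δ → φ ∈ Δ.1 := by
  refine ⟨fun h Δ hΔ => hΔ φ h, fun h => by_contra fun hbox => ?_⟩
  have hcons : Consistent (insert (φ.imp bot) {ψ | ψ.box ∈ Γ.1}) := fun hbot =>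
    hbox <| mem_of_derives Γ.2 <|
      (Derives.of_insert_neg_bot hbot).box_image.mono (by rintro _ ⟨ψ, hψ, rfl⟩; exact hψ)
  obtain ⟨Δ, hsub, hΔ⟩ := exists_maximal_consistent hcons
  have hφ : φ ∈ Δ := h ⟨Δ, hΔ⟩ fun ψ hψ => hsub (Set.mem_insert_of_mem _ hψ)
  exact bot_notMem hΔ (mp_mem hΔ (hsub (Set.mem_insert _ _)) hφ)

lemma isNFrame : IsNFrame le nbhd where
  refl Γ ψ h := mem_of_provable_imp Γ.2 (axT ψ) h
  trans Γ Δ E hΓΔ hΔE ψ h := hΔE ψ (hΓΔ ψ.box (mem_of_provable_imp Γ.2 (ax4 ψ) h))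
  isUpset_N X := by
    rintro Γ Δ hΓΔ ⟨ψ, hψ, hX⟩
    refine ⟨ψ, ?_, fun E hΔE => hX E fun χ hχ => hΔE χ (hΓΔ χ.box ?_)⟩
    · exact hΓΔ ψ.bbox (mem_of_provable_imp Γ.2 (axB ψ) hψ)
    · exact mem_of_provable_imp Γ.2 (ax4 χ) hχ
  mem_N_iff_inter Γ X := by
    refine exists_congr fun ψ => and_congr_right fun _ => forall_congr' fun Δ => ?_
    exact ⟨fun h hΓΔ => (and_iff_left hΓΔ).trans (h hΓΔ),
      fun h hΓΔ => (and_iff_left hΓΔ).symm.trans (h hΓΔ)⟩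

lemma bbox_mem_iff (Γ : CanonicalWorld) (φ : MForm) :
    φ.bbox ∈ Γ.1 ↔ Γ ∈ nbhd {Δ | φ ∈ Δ.1} := by
  refine ⟨fun h => ⟨φ, h, fun _ _ => Iff.rfl⟩, fun ⟨ψ, hψ, hφψ⟩ => ?_⟩
  have hbox : (φ.miff ψ).box ∈ Γ.1 := (box_mem_iff Γ _).2 fun Δ hΔ =>
    (miff_mem_iff Δ.2).2 (hφψ Δ hΔ)
  have hbbox := mem_of_provable_imp Γ.2 (axN φ ψ) hbox
  exact ((miff_mem_iff Γ.2).1 hbbox).2 hψ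

theorem mem_mSat_iff (φ : MForm) (Γ : CanonicalWorld) :
    Γ ∈ MSat le nbhd val φ ↔ φ ∈ Γ.1 := by
  induction φ generalizing Γ with
  | var p => exact Iff.rfl
  | bot => exact iff_of_false id (bot_notMem Γ.2)
  | top => exact iff_of_true trivial (mem_of_provable Γ.2 (.taut MTaut.top))
  | and φ ψ ihφ ihψ => exact (and_congr (ihφ Γ) (ihψ Γ)).trans (and_mem_iff Γ.2).symm
  | or φ ψ ihφ ihψ => exact (or_congr (ihφ Γ) (ihψ Γ)).trans (or_mem_iff Γ.2).symm
  | imp φ ψ ihφ ihψ => exact (imp_congr (ihφ Γ) (ihψ Γ)).trans (imp_mem_iff Γ.2).symm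
  | box φ ih =>
    exact (forall₂_congr fun Δ _ => ih Δ).trans (box_mem_iff Γ φ).symm
  | bbox φ ih =>
    have hset : MSat le nbhd val φ = {Δ | φ ∈ Δ.1} := Set.ext ih
    exact (congrArg (Γ ∈ nbhd ·) hset).to_iff.trans (bbox_mem_iff Γ φ).symm

end CanonicalWorld

end NS4

/-- Soundness and completeness of `NS4` with respect to its N-frames. -/
theorem stmt12 (φ : MForm) :
    NS4 φ ↔
      ∀ (W : Type) (le : W → W → Prop),
        (∀ w, le w w) → (∀ a b c, le a b → le b c → le a c) →
        ∀ N : Set W → Set W,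
          (∀ X : Set W, IsUpset le (N X)) →
          (∀ (w : W) (X : Set W), w ∈ N X ↔ w ∈ N (X ∩ {v | le w v})) →
          ∀ (V : ℕ → Set W) (w : W), w ∈ MSat le N V φ := by
  refine ⟨fun h W le hrefl htrans N hup hN V w => h.mem_mSat ⟨hrefl, htrans, hup, hN⟩ V w,
    fun h => NS4.of_forall_maximalConsistent fun Γ hΓ => ?_⟩
  have hF := NS4.CanonicalWorld.isNFrame
  exact (NS4.CanonicalWorld.mem_mSat_iff φ ⟨Γ, hΓ⟩).1 <|
    h _ _ hF.refl hF.trans _ hF.isUpset_N hF.mem_N_iff_inter _ ⟨Γ, hΓ⟩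
end

section
/- For every n ∈ ℕ and all L□-formulas φ₁, …, φₙ, ψ, χ: if NS4 ⊢ (■φ₁ ∧ … ∧ ■φₙ) → (ψ ↔ χ), then NS4 ⊢ (■φ₁ ∧ … ∧ ■φₙ) → (■ψ ↔ ■χ). (For n = 0 the premise and conclusion are ψ ↔ χ and ■ψ ↔ ■χ respectively.) -/
def bconjM : MForm → List MForm → MForm
  | a, [] => a.bbox
  | a, b :: l => (a.bbox).and (bconjM b l)

/-- `guardM [φ₁,…,φₙ] χ` is `(■φ₁ ∧ … ∧ ■φₙ) → χ` for `n ≥ 1`, and `χ` for `n = 0`. -/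
def guardM : List MForm → MForm → MForm
  | [], b => b
  | a :: l, b => (bconjM a l).imp b

/-!
A guard `G = ■φ₁ ∧ … ∧ ■φₙ` proves its own necessitation, `⊢ G → □G`, by the axiom `■φ → □■φ`
and the distribution of `□` over `∧`. Hence necessitation and `K` turn `⊢ G → (ψ ↔ χ)` into
`⊢ G → □(ψ ↔ χ)`, and the congruence axiom `□(ψ ↔ χ) → (■ψ ↔ ■χ)` finishes. For `n = 0` the
congruence axiom applies directly to the necessitated premise.
-/

namespace NS4

variable {a b c d γ ψ χ : MForm}

theorem imp_trans (hab : NS4 (a.imp b)) (hbc : NS4 (b.imp c)) : NS4 (a.imp c) := by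
  refine mp (mp (taut ?_) hab) hbc
  intro v _ _ _ _ himp
  simp only [himp]
  cases v a <;> cases v b <;> cases v c <;> rfl

theorem and_imp_and (hab : NS4 (a.imp b)) (hcd : NS4 (c.imp d)) :
    NS4 ((a.and c).imp (b.and d)) := by
  refine mp (mp (taut ?_) hab) hcd
  intro v _ _ hand _ himp
  simp only [himp, hand]
  cases v a <;> cases v b <;> cases v c <;> cases v d <;> rfl

theorem box_imp_box (h : NS4 (a.imp b)) : NS4 (a.box.imp b.box) :=
  mp (axK a b) (nec h)

theorem box_and_imp_box_and (a b : MForm) : NS4 ((a.box.and b.box).imp (a.and b).box) := by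
  have hpair : NS4 (a.imp (b.imp (a.and b))) := by
    refine taut ?_
    intro v _ _ hand _ himp
    simp only [himp, hand]
    cases v a <;> cases v b <;> rfl
  have hcurried : NS4 (a.box.imp (b.box.imp (a.and b).box)) :=
    imp_trans (box_imp_box hpair) (axK b (a.and b))
  refine mp (taut ?_) hcurried
  intro v _ _ hand _ himp
  simp only [himp, hand]
  cases v a.box <;> cases v b.box <;> cases v (a.and b).box <;> rfl

theorem bconjM_imp_box (l : List MForm) (a : MForm) :
    NS4 ((bconjM a l).imp (bconjM a l).box) := by
  induction l generalizing a with
  | nil => exact axB a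
  | cons b l ih =>
    exact imp_trans (and_imp_and (axB a) (ih b)) (box_and_imp_box_and a.bbox (bconjM b l))

theorem bbox_congr_of_imp_box (hγ : NS4 (γ.imp γ.box)) (h : NS4 (γ.imp (ψ.miff χ))) :
    NS4 (γ.imp (ψ.bbox.miff χ.bbox)) :=
  imp_trans (imp_trans hγ (box_imp_box h)) (axN ψ χ)

end NS4

/-- The rules `Rₙ` are derivable in `NS4`: if
`NS4 ⊢ (■φ₁ ∧ … ∧ ■φₙ) → (ψ ↔ χ)` then `NS4 ⊢ (■φ₁ ∧ … ∧ ■φₙ) → (■ψ ↔ ■χ)`. -/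
theorem stmt15 (l : List MForm) (ψ χ : MForm)
    (h : NS4 (guardM l (ψ.miff χ))) :
    NS4 (guardM l ((ψ.bbox).miff (χ.bbox))) := by
  cases l with
  | nil => exact NS4.mp (NS4.axN ψ χ) (NS4.nec h)
  | cons a l => exact NS4.bbox_congr_of_imp_box (NS4.bconjM_imp_box l a) h
end

section
/- For every n ∈ ℕ, a modal N-frame (W, N) satisfies condition E_n if and only if it validates the rule R_n, i.e., for all distinct propositional variables p₁, …, pₙ, q, r and every valuation V: if (■p₁ ∧ … ∧ ■pₙ) → (q ↔ r) is true at every point of the model (W, N, V), then (■p₁ ∧ … ∧ ■pₙ) → (■q ↔ ■r) is true at every point of (W, N, V). -/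
inductive BForm : Type
  | var : ℕ → BForm
  | and : BForm → BForm → BForm
  | or : BForm → BForm → BForm
  | imp : BForm → BForm → BForm
  | bbox : BForm → BForm

def BForm.biff (φ ψ : BForm) : BForm := (φ.imp ψ).and (ψ.imp φ)

def BSat {W : Type*} (N : Set W → Set W) (V : ℕ → Set W) : BForm → Set W
  | .var p => V p
  | .and φ ψ => BSat N V φ ∩ BSat N V ψ
  | .or φ ψ => BSat N V φ ∪ BSat N V ψ
  | .imp φ ψ => {w | w ∈ BSat N V φ → w ∈ BSat N V ψ}
  | .bbox φ => N (BSat N V φ)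

def bconjB : ℕ → List ℕ → BForm
  | p, [] => (BForm.var p).bbox
  | p, q :: l => ((BForm.var p).bbox).and (bconjB q l)

def guardB : List ℕ → BForm → BForm
  | [], b => b
  | p :: l, b => (bconjB p l).imp b

def En {W : Type*} (N : Set W → Set W) (n : ℕ) : Prop :=
  ∀ (X : Set W) (Z : Fin n → Set W),
    N X ∩ (⋂ i, N (Z i)) = N (X ∩ ⋂ i, N (Z i)) ∩ ⋂ i, N (Z i)

/-! Writing `G` for `⋂ i, N (Z i)`, condition `Eₙ` says exactly that `X ∩ G = Y ∩ G` implies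
`N X ∩ G = N Y ∩ G` (take `Y = X ∩ G` for the converse). With `G` the truth set of the guard
`■p₁ ∧ … ∧ ■pₙ`, global truth of the premise and of the conclusion of `Rₙ` are these two
equations for `X = V(q)`, `Y = V(r)`; conversely any `X, Y, Z` arise from a suitable valuation
because the variables `p₁, …, pₙ, q, r` are distinct. -/

section Semantics

variable {W : Type*} (N : Set W → Set W) (V : ℕ → Set W)

theorem BSat_bconjB (p : ℕ) (l : List ℕ) : BSat N V (bconjB p l) = ⋂ x ∈ p :: l, N (V x) := by
  induction l generalizing p with
  | nil => simp [bconjB, BSat]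
  | cons a l ih => simp [bconjB, BSat, ih]

theorem BSat_guardB (ps : List ℕ) (φ : BForm) :
    BSat N V (guardB ps φ) = {w | w ∈ ⋂ p ∈ ps, N (V p) → w ∈ BSat N V φ} := by
  cases ps with
  | nil => simp [guardB]
  | cons p l => simp [guardB, BSat, BSat_bconjB]

theorem BSat_biff (φ ψ : BForm) :
    BSat N V (φ.biff ψ) = {w | w ∈ BSat N V φ ↔ w ∈ BSat N V ψ} := by
  ext w
  simp only [BForm.biff, BSat, Set.mem_inter_iff, Set.mem_ofPred_eq, iff_def]

theorem forall_mem_BSat_guardB_biff_iff (ps : List ℕ) (φ ψ : BForm) :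
    (∀ w, w ∈ BSat N V (guardB ps (φ.biff ψ))) ↔
      BSat N V φ ∩ ⋂ p ∈ ps, N (V p) = BSat N V ψ ∩ ⋂ p ∈ ps, N (V p) := by
  simp only [BSat_guardB, BSat_biff, Set.mem_ofPred_eq, Set.ext_iff, Set.mem_inter_iff]
  grind

end Semantics

theorem Set.biInter_ofFn {α β : Type*} {n : ℕ} (f : Fin n → α) (g : α → Set β) :
    ⋂ x ∈ List.ofFn f, g x = ⋂ i, g (f i) := by
  simp only [List.mem_ofFn', Set.biInter_range]

theorem en_iff_inter_congr {W : Type*} (N : Set W → Set W) (n : ℕ) :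
    En N n ↔ ∀ (Z : Fin n → Set W) (X Y : Set W),
      X ∩ ⋂ i, N (Z i) = Y ∩ ⋂ i, N (Z i) → N X ∩ ⋂ i, N (Z i) = N Y ∩ ⋂ i, N (Z i) := by
  refine ⟨fun hE Z X Y hXY => by rw [hE X Z, hE Y Z, hXY], fun hC X Z => ?_⟩
  exact hC Z X _ (by rw [Set.inter_assoc, Set.inter_self])

/-- A modal N-frame satisfies `Eₙ` iff it validates the rule `Rₙ`. -/
theorem stmt16 {W : Type*} (N : Set W → Set W) (n : ℕ) :
    En N n ↔
      ∀ (ps : List ℕ) (q r : ℕ), ps.length = n → (q :: r :: ps).Nodup →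
        ∀ V : ℕ → Set W,
          (∀ w : W, w ∈ BSat N V (guardB ps ((BForm.var q).biff (BForm.var r)))) →
          (∀ w : W, w ∈ BSat N V
              (guardB ps (((BForm.var q).bbox).biff ((BForm.var r).bbox)))) := by
  simp only [en_iff_inter_congr, forall_mem_BSat_guardB_biff_iff, BSat]
  constructor
  · rintro hC ps q r rfl - V
    rw [← List.ofFn_get ps, Set.biInter_ofFn]
    exact hC _ _ _
  · intro hR Z X Y
    let V : ℕ → Set W
      | 0 => X
      | 1 => Y
      | k + 2 => if h : k < n then Z ⟨k, h⟩ else ∅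
    have hnodup : (0 :: 1 :: List.ofFn fun i : Fin n => i.val + 2).Nodup := by
      simp [List.nodup_ofFn, Function.Injective, Fin.ext_iff]
    simpa [Set.biInter_ofFn, V] using hR _ 0 1 (by simp) hnodup V
end
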